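/- For every fixed real y with 0 < y ≤ 1, the function x ↦ ℵ(x,y) is non-increasing (antitone) on the interval [0,∞). -/

import Mathlib

/-- The function ℵ(x, y). -/
noncomputable def aleph (x y : ℝ) : ℝ :=
  1 - (2 * Real.sqrt (1 - y) * x + x ^ 2) / y
    - 2 * Real.sqrt ((2 * Real.sqrt (1 - y) * x + x ^ 2) / y) * x - x ^ 2

/-!
Writing `q x = (2 √(1 - y) x + x²) / y`, we have `ℵ(x, y) = 1 - q x - 2 √(q x) x - x²`.
Since `q` is monotone on `[0, ∞)` and `√` is monotone and nonnegative, each of the three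
subtracted terms is monotone there.
-/

open Set

lemma monotoneOn_two_mul_add_sq_div {s y : ℝ} (hs : 0 ≤ s) (hy : 0 ≤ y) :
    MonotoneOn (fun x => (2 * s * x + x ^ 2) / y) (Ici 0) := by
  intro a ha b _ hab
  simp only [mem_Ici] at ha
  dsimp only
  gcongr

lemma antitoneOn_one_sub_sub_two_mul_sqrt_mul_sub_sq {q : ℝ → ℝ} (hq : MonotoneOn q (Ici 0)) :
    AntitoneOn (fun x => 1 - q x - 2 * Real.sqrt (q x) * x - x ^ 2) (Ici 0) := by
  intro a ha b hb hab
  simp only [mem_Ici] at ha hb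
  have hqab := hq ha hb hab
  dsimp only
  gcongr

theorem aleph_antitoneOn_general (y : ℝ) (hy0 : 0 < y) :
    AntitoneOn (fun x => aleph x y) (Set.Ici (0 : ℝ)) :=
  antitoneOn_one_sub_sub_two_mul_sqrt_mul_sub_sq
    (monotoneOn_two_mul_add_sq_div (Real.sqrt_nonneg _) hy0.le)

/-- for fixed `0 < y ≤ 1`, the map `x ↦ ℵ(x, y)` is antitone on `[0, ∞)`. -/
theorem aleph_antitoneOn (y : ℝ) (hy0 : 0 < y) (hy1 : y ≤ 1) :
    AntitoneOn (fun x => aleph x y) (Set.Ici (0 : ℝ)) :=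
  aleph_antitoneOn_general y hy0
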